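/- Let V be a finite set, h a binary preference function on V, σ* a ranking of V, and ω an admissible weight function (symmetric, monotone, triangle inequality). Then the expected weighted misranking loss of the QuickSort output satisfies E_s[L_ω(QuickSort_s(V,h), σ*)] ≤ 2·L_ω(h, σ*), where L_ω(σ,σ*) = C(n,2)⁻¹ Σ_{u≠v} σ(u,v)σ*(v,u)ω(σ*(u),σ*(v)) and L_ω(h,σ*) is defined analogously with h(u,v) in place of σ(u,v). -/

import Mathlib

variable {V : Type*} [DecidableEq V]

/-- QuickSort on a list using a (possibly non-transitive) preference function:
the head is the pivot, elements preferred to the pivot go left.  Running it on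
a uniformly random permutation of the input is equivalent to uniformly random
pivot selection. -/
def qsort (h : V → V → Bool) : List V → List V
  | [] => []
  | x :: xs =>
      qsort h (xs.filter (fun y => h y x)) ++ x :: qsort h (xs.filter (fun y => !(h y x)))
  termination_by l => l.length
  decreasing_by
    · simp only [List.length_cons]; exact Nat.lt_succ_of_le (by first | exact (List.length_unattach).le.trans ((List.length_filter_le _ _).trans (List.length_attach).le) | simp [List.length_filter_le] | exact (List.length_filter_le _ _).trans (by simp))
    · simp only [List.length_cons]; exact Nat.lt_succ_of_le (by first | exact (List.length_unattach).le.trans ((List.length_filter_le _ _).trans (List.length_attach).le) | simp [List.length_filter_le] | exact (List.length_filter_le _ _).trans (by simp))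

/-- The unordered pairs compared directly (pivot vs. element of its call). -/
def directPairs (h : V → V → Bool) : List V → List (Finset V)
  | [] => []
  | x :: xs =>
      xs.map (fun y => ({x, y} : Finset V)) ++
      (directPairs h (xs.filter (fun y => h y x)) ++
        directPairs h (xs.filter (fun y => !(h y x))))
  termination_by l => l.length
  decreasing_by
    · simp only [List.length_cons]; exact Nat.lt_succ_of_le (by first | exact (List.length_unattach).le.trans ((List.length_filter_le _ _).trans (List.length_attach).le) | simp [List.length_filter_le] | exact (List.length_filter_le _ _).trans (by simp))
    · simp only [List.length_cons]; exact Nat.lt_succ_of_le (by first | exact (List.length_unattach).le.trans ((List.length_filter_le _ _).trans (List.length_attach).le) | simp [List.length_filter_le] | exact (List.length_filter_le _ _).trans (by simp))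

/-- The unordered triples present together in a recursive call whose pivot is
one of them. -/
def pivotTriples (h : V → V → Bool) : List V → List (Finset V)
  | [] => []
  | x :: xs =>
      (xs.product xs).map (fun p => ({x, p.1, p.2} : Finset V)) ++
      (pivotTriples h (xs.filter (fun y => h y x)) ++
        pivotTriples h (xs.filter (fun y => !(h y x))))
  termination_by l => l.length
  decreasing_by
    · simp only [List.length_cons]; exact Nat.lt_succ_of_le (by first | exact (List.length_unattach).le.trans ((List.length_filter_le _ _).trans (List.length_attach).le) | simp [List.length_filter_le] | exact (List.length_filter_le _ _).trans (by simp))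
    · simp only [List.length_cons]; exact Nat.lt_succ_of_le (by first | exact (List.length_unattach).le.trans ((List.length_filter_le _ _).trans (List.length_attach).le) | simp [List.length_filter_le] | exact (List.length_filter_le _ _).trans (by simp))

/-- Expectation of `f` of the input list over a uniformly random ordering of
`V` (equivalently, over the random bits of QuickSort's pivot choices). -/
noncomputable def qsExp [Fintype V] (f : List V → ℝ) : ℝ :=
  (((Finset.univ : Finset V).toList.permutations.map f).sum) /
    (Nat.factorial (Fintype.card V))

/-- p_{uv}: the probability that the pair {u,v} is compared directly. -/
noncomputable def pPair [Fintype V] (h : V → V → Bool) (u v : V) : ℝ :=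
  qsExp (fun l => if ({u, v} : Finset V) ∈ directPairs h l then 1 else 0)

/-- p_{uvw}: the probability that u, v, w are in the same recursive call when
one of them is first chosen as pivot. -/
noncomputable def pTriple [Fintype V] (h : V → V → Bool) (u v w : V) : ℝ :=
  qsExp (fun l => if ({u, v, w} : Finset V) ∈ pivotTriples h l then 1 else 0)

/-- The {0,1}-valued preference function as a real number. -/
def hr (h : V → V → Bool) (a b : V) : ℝ := if h a b then 1 else 0

/-- Indicator that `u` is ranked before `v` in the output list. -/
def rankBefore (l : List V) (u v : V) : ℝ := if l.idxOf u < l.idxOf v then 1 else 0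

/-! Averaging over the orderings `l` of the input, the first element `x` is a uniformly random
pivot, and given `x` the lists `l.filter (h · x)` and `l.filter (!h · x)` handed to the recursive
calls are again uniformly random orderings of their elements. So the expected loss of QuickSort
obeys a recursion whose step cost is the loss on the pairs the pivot separates, and the loss of `h`
splits along the same recursion. What the induction leaves over is a sum over ordered triples
`(x, a, b)` with `a` sent left and `b` sent right of the pivot `x`. Summed over the six orderings of
a triple it is nonpositive: on a transitive triple only one ordering contributes, and on a cyclic
triple the three rotations contribute exactly `c a b + c b x + c x a - 2 (c b a + c x b + c a x)`,
which is `≤ 0` for the `ω`-weighted misranking cost by symmetry, monotonicity along chains and the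
triangle inequality. -/

variable {α : Type*}

noncomputable def permAvg (t : List α) (G : List α → ℝ) : ℝ :=
  (t.permutations.map G).sum / t.length.factorial

section PermAvg

lemma permAvg_congr {t : List α} {F G : List α → ℝ} (hFG : ∀ l, l.Perm t → F l = G l) :
    permAvg t F = permAvg t G := by
  rw [permAvg, permAvg, List.map_congr_left fun l hl => hFG l (List.mem_permutations.1 hl)]

lemma permAvg_add (t : List α) (F G : List α → ℝ) :
    permAvg t (fun l => F l + G l) = permAvg t F + permAvg t G := by
  simp only [permAvg, List.sum_map_add, add_div]

lemma permAvg_const (t : List α) (r : ℝ) : permAvg t (fun _ => r) = r := by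
  rw [permAvg, List.map_const', List.sum_replicate, List.length_permutations, nsmul_eq_mul,
    mul_div_cancel_left₀ _ (by positivity)]

lemma permAvg_const_mul (t : List α) (r : ℝ) (F : List α → ℝ) :
    permAvg t (fun l => r * F l) = r * permAvg t F := by
  rw [permAvg, permAvg, List.sum_map_mul_left, mul_div_assoc]

lemma qsExp_eq_permAvg [Fintype α] (F : List α → ℝ) :
    qsExp F = permAvg (Finset.univ : Finset α).toList F := by
  rw [qsExp, permAvg, Finset.length_toList, Finset.card_univ]

variable [DecidableEq α]

lemma permutations_perm_flatMap_erase {t : List α} (ht : t.Nodup) (hne : t ≠ []) :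
    t.permutations.Perm (t.flatMap fun x => (t.erase x).permutations.map (x :: ·)) := by
  refine (List.perm_ext_iff_of_nodup (List.nodup_permutations t ht) ?_).2 fun l => ?_
  · refine List.nodup_flatMap.2 ⟨fun x _ => (List.nodup_permutations _ (ht.erase x)).map
      List.cons_injective, ht.imp fun hxy => ?_⟩
    simp [Function.onFun, List.disjoint_left]
    grind
  · rcases l with _ | ⟨y, ys⟩
    · simpa [List.mem_permutations] using Ne.symm hne
    · simp [List.mem_permutations, List.cons_perm_iff_perm_erase]

lemma length_mul_permAvg {t : List α} (ht : t.Nodup) (G : List α → ℝ) :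
    t.length * permAvg t G = (t.map fun x => permAvg (t.erase x) fun xs => G (x :: xs)).sum := by
  rcases eq_or_ne t [] with rfl | hne
  · simp
  obtain ⟨k, hk⟩ : ∃ k, t.length = k + 1 := Nat.exists_eq_succ_of_ne_zero (by simpa using hne)
  have hlen : ∀ x ∈ t, (t.erase x).length = k := fun x hx => by
    rw [List.length_erase_of_mem hx, hk]; rfl
  rw [List.map_congr_left fun x hx => by rw [permAvg, hlen x hx, div_eq_mul_inv],
    List.sum_map_mul_right, permAvg, ((permutations_perm_flatMap_erase ht hne).map G).sum_eq, hk,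
    Nat.factorial_succ]
  simp [List.flatMap_def, List.sum_flatten, Function.comp_def]
  field_simp

lemma permAvg_filter (p : α → Bool) {t : List α} (ht : t.Nodup) (G : List α → ℝ) :
    permAvg t (fun l => G (l.filter p)) = permAvg (t.filter p) G := by
  rcases eq_or_ne t [] with rfl | hne
  · simp [permAvg]
  have ih : ∀ x ∈ t, ∀ G' : List α → ℝ,
      permAvg (t.erase x) (fun l => G' (l.filter p)) = permAvg ((t.filter p).erase x) G' := by
    intro x hx G'
    rw [List.erase_filter]
    exact permAvg_filter p (ht.erase x) G'
  have hstep : ∀ x ∈ t, permAvg (t.erase x) (fun xs => G ((x :: xs).filter p)) =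
      if p x then permAvg ((t.filter p).erase x) (fun ys => G (x :: ys))
      else permAvg (t.filter p) G := by
    intro x hx
    by_cases hpx : p x
    · simp only [List.filter_cons, hpx, if_true, ih x hx (fun ys => G (x :: ys))]
    · rw [if_neg hpx, ← List.erase_of_not_mem (a := x) (l := t.filter p) (by simp [hpx]),
        ← ih x hx G]
      simp only [List.filter_cons, hpx, Bool.false_eq_true, if_false]
  refine mul_left_cancel₀ (Nat.cast_ne_zero.2 (List.length_pos_iff.2 hne).ne') ?_
  rw [length_mul_permAvg ht, List.map_congr_left hstep, List.sum_map_ite]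
  simp only [Bool.decide_eq_true, ← length_mul_permAvg (ht.filter p), List.map_const',
    List.sum_replicate, nsmul_eq_mul, ← add_mul, decide_not]
  rw [← Nat.cast_add, ← List.length_eq_length_filter_add]
termination_by t.length
decreasing_by exact List.length_erase_of_mem hx ▸ Nat.pred_lt (by simpa using hne)

end PermAvg

section PairSum

variable {M : Type*} [AddCommMonoid M]

def pairSum (D : α → α → M) : List α → M
  | [] => 0
  | x :: xs => (xs.map (D x)).sum + pairSum D xs

def crossSum (D : α → α → M) (A B : List α) : M :=
  (A.map fun a => (B.map (D a)).sum).sum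

@[simp] lemma pairSum_nil (D : α → α → M) : pairSum D [] = 0 := rfl

@[simp] lemma pairSum_cons (D : α → α → M) (x : α) (xs : List α) :
    pairSum D (x :: xs) = (xs.map (D x)).sum + pairSum D xs := rfl

lemma pairSum_append (D : α → α → M) (A B : List α) :
    pairSum D (A ++ B) = pairSum D A + pairSum D B + crossSum D A B := by
  induction A with
  | nil => simp [crossSum]
  | cons x xs ih =>
    simp only [List.cons_append, pairSum_cons, ih, crossSum, List.map_append, List.sum_append,
      List.map_cons, List.sum_cons]
    abel

lemma pairSum_perm {D : α → α → M} (hD : ∀ a b, D a b = D b a) {l₁ l₂ : List α}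
    (p : l₁.Perm l₂) : pairSum D l₁ = pairSum D l₂ := by
  induction p with
  | nil => rfl
  | cons x p ih => simp [ih, (p.map _).sum_eq]
  | swap x y l => simp [hD y x]; abel
  | trans _ _ ih₁ ih₂ => exact ih₁.trans ih₂

lemma crossSum_perm (D : α → α → M) {A A' B B' : List α} (hA : A.Perm A') (hB : B.Perm B') :
    crossSum D A B = crossSum D A' B' := by
  simp only [crossSum, (hB.map _).sum_eq, (hA.map _).sum_eq]

lemma crossSum_cons_right (D : α → α → M) (A : List α) (x : α) (B : List α) :
    crossSum D A (x :: B) = (A.map (D · x)).sum + crossSum D A B := by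
  simp [crossSum, List.sum_map_add]

variable [DecidableEq α]

lemma crossSum_eq_sum (D : α → α → M) {A B : List α} (hA : A.Nodup) (hB : B.Nodup) :
    crossSum D A B = ∑ a ∈ A.toFinset, ∑ b ∈ B.toFinset, D a b := by
  simp [crossSum, List.sum_toFinset _ hA, List.sum_toFinset _ hB]

lemma pairSum_eq_sum_idxOf (D : α → α → M) {o : List α} (ho : o.Nodup) :
    pairSum D o = ∑ u ∈ o.toFinset, ∑ v ∈ o.toFinset,
      if o.idxOf u < o.idxOf v then D u v else 0 := by
  induction o with
  | nil => simp
  | cons x xs ih =>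
    obtain ⟨hx, hxs⟩ := List.nodup_cons.1 ho
    have hx' : x ∉ xs.toFinset := by simpa using hx
    have hidx : ∀ u ∈ xs.toFinset, (x :: xs).idxOf u = xs.idxOf u + 1 := fun u hu =>
      List.idxOf_cons_ne xs (by rintro rfl; exact hx' hu)
    rw [List.toFinset_cons, Finset.sum_insert hx', Finset.sum_insert hx',
      Finset.sum_congr rfl fun u _ => Finset.sum_insert hx', pairSum_cons, ih hxs,
      ← List.sum_toFinset _ hxs]
    simp only [List.idxOf_cons_self, lt_self_iff_false, if_false, zero_add, Nat.not_lt_zero]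
    congr 1
    · exact Finset.sum_congr rfl fun v hv => by simp [hidx v hv]
    · exact Finset.sum_congr rfl fun u hu => Finset.sum_congr rfl fun v hv => by
        simp [hidx u hu, hidx v hv]

lemma crossSum_filter_erase (D : α → α → M) {t : List α} (ht : t.Nodup) (p q : α → Bool)
    (x : α) : crossSum D ((t.erase x).filter p) ((t.erase x).filter q) =
      ∑ a ∈ t.toFinset, ∑ b ∈ t.toFinset, if (a ≠ x ∧ p a) ∧ (b ≠ x ∧ q b) then D a b else 0 := by
  rw [crossSum_eq_sum D ((ht.erase x).filter p) ((ht.erase x).filter q), ht.erase_eq_filter]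
  simp only [List.toFinset_filter, Finset.filter_filter, Finset.sum_filter, ite_and]
  exact Finset.sum_congr rfl fun a _ => by split_ifs <;> simp_all

end PairSum

section Ranking

variable [DecidableEq α] {o : List α}

lemma rankBefore_add_rankBefore (hall : ∀ v, v ∈ o) {u v : α} (huv : u ≠ v) :
    rankBefore o u v + rankBefore o v u = 1 := by
  have : o.idxOf u ≠ o.idxOf v := fun e => huv ((List.idxOf_inj (hall u)).1 e)
  rcases this.lt_or_gt with h | h <;> simp [rankBefore, h, h.not_gt]

variable [Fintype α]

lemma sum_rankBefore_mul (D : α → α → ℝ) (ho : o.Nodup) (hall : ∀ v, v ∈ o) :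
    ∑ p ∈ Finset.univ.filter (fun p : α × α => p.1 ≠ p.2), rankBefore o p.1 p.2 * D p.1 p.2 =
      pairSum D o := by
  rw [pairSum_eq_sum_idxOf D ho, Finset.eq_univ_of_forall fun v => List.mem_toFinset.2 (hall v),
    ← Finset.sum_product', Finset.sum_filter]
  refine Finset.sum_congr rfl fun ⟨u, v⟩ _ => ?_
  by_cases huv : u = v <;> simp [huv, rankBefore]

lemma sum_offDiag_eq_pairSum (f : α → α → ℝ) (ho : o.Nodup) (hall : ∀ v, v ∈ o) :
    ∑ p ∈ Finset.univ.filter (fun p : α × α => p.1 ≠ p.2), f p.1 p.2 =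
      pairSum (fun u v => f u v + f v u) o := by
  set S := Finset.univ.filter (fun p : α × α => p.1 ≠ p.2)
  have hswap : ∑ p ∈ S, rankBefore o p.2 p.1 * f p.1 p.2 =
      ∑ p ∈ S, rankBefore o p.1 p.2 * f p.2 p.1 :=
    Finset.sum_equiv (Equiv.prodComm α α) (by simp [S, eq_comm]) fun _ _ => rfl
  calc ∑ p ∈ S, f p.1 p.2
      = ∑ p ∈ S, (rankBefore o p.1 p.2 + rankBefore o p.2 p.1) * f p.1 p.2 :=
        Finset.sum_congr rfl fun p hp => by
          rw [rankBefore_add_rankBefore hall (Finset.mem_filter.1 hp).2, one_mul]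
    _ = ∑ p ∈ S, rankBefore o p.1 p.2 * (f p.1 p.2 + f p.2 p.1) := by
        simp only [add_mul, mul_add, Finset.sum_add_distrib, hswap]
    _ = pairSum (fun u v => f u v + f v u) o :=
        sum_rankBefore_mul (fun u v => f u v + f v u) ho hall

end Ranking

lemma sum_sum_sum_nonpos_of_symmetrize_nonpos (s : Finset α) {F : α → α → α → ℝ}
    (hF : ∀ x a b, F x a b + F x b a + F a x b + F a b x + F b x a + F b a x ≤ 0) :
    ∑ x ∈ s, ∑ a ∈ s, ∑ b ∈ s, F x a b ≤ 0 := by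
  let S : (α → α → α → ℝ) → ℝ := fun G => ∑ x ∈ s, ∑ a ∈ s, ∑ b ∈ s, G x a b
  have swap₁₂ : ∀ G, S (fun x a b => G a x b) = S G := fun _ => Finset.sum_comm
  have swap₂₃ : ∀ G, S (fun x a b => G x b a) = S G :=
    fun _ => Finset.sum_congr rfl fun _ _ => Finset.sum_comm
  have hsum : S (fun x a b => F x a b + F x b a + F a x b + F a b x + F b x a + F b a x) ≤ 0 :=
    Finset.sum_nonpos fun x _ => Finset.sum_nonpos fun a _ => Finset.sum_nonpos fun b _ => hF x a b
  have h₁ := swap₂₃ F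
  have h₂ := swap₁₂ F
  have h₃ := (swap₁₂ fun x a b => F x b a).trans h₁
  have h₄ := (swap₂₃ fun x a b => F a x b).trans h₂
  have h₅ := (swap₁₂ fun x a b => F b x a).trans h₄
  simp only [S, Finset.sum_add_distrib] at hsum h₁ h₂ h₃ h₄ h₅ ⊢
  linarith

section QuickSort

variable (h : α → α → Bool) (c : α → α → ℝ)

lemma qsort_perm : ∀ l : List α, (qsort h l).Perm l
  | [] => by simp [qsort]
  | x :: xs => by
    rw [qsort]
    exact ((qsort_perm _).append ((qsort_perm _).cons x)).trans
      (List.perm_middle.trans ((List.filter_append_perm _ xs).cons x))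
termination_by l => l.length
decreasing_by all_goals exact Nat.lt_succ_of_le (List.length_filter_le _ _)

def splitCost (x : α) (s : List α) : ℝ :=
  ((s.filter (h · x)).map (c · x)).sum + ((s.filter (!h · x)).map (c x)).sum +
    crossSum c (s.filter (h · x)) (s.filter (!h · x))

lemma splitCost_perm (x : α) {s s' : List α} (hs : s.Perm s') :
    splitCost h c x s = splitCost h c x s' := by
  simp only [splitCost, ((hs.filter _).map _).sum_eq, crossSum_perm c (hs.filter _) (hs.filter _)]

lemma pairSum_qsort_cons (x : α) (xs : List α) :
    pairSum c (qsort h (x :: xs)) = pairSum c (qsort h (xs.filter (h · x))) +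
      pairSum c (qsort h (xs.filter (!h · x))) + splitCost h c x xs := by
  have hL := qsort_perm h (xs.filter (h · x))
  have hR := qsort_perm h (xs.filter (!h · x))
  rw [qsort, pairSum_append, pairSum_cons, crossSum_cons_right, splitCost, (hL.map _).sum_eq,
    (hR.map _).sum_eq, crossSum_perm c hL hR]
  abel

def prefLoss (u v : α) : ℝ := hr h u v * c u v + hr h v u * c v u

lemma prefLoss_comm (u v : α) : prefLoss h c u v = prefLoss h c v u := add_comm _ _

variable {h c}

lemma prefLoss_nonneg (hc : ∀ u v, 0 ≤ c u v) (u v : α) : 0 ≤ prefLoss h c u v := by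
  unfold prefLoss hr
  split_ifs <;> linarith [hc u v, hc v u]

lemma le_prefLoss (hc : ∀ u v, 0 ≤ c u v) {u v : α} (huv : h u v) : c u v ≤ prefLoss h c u v := by
  unfold prefLoss hr
  split_ifs <;> simp_all

variable (h c) in
def crossExcess (x : α) (s : List α) : ℝ :=
  crossSum c (s.filter (h · x)) (s.filter (!h · x)) -
    2 * crossSum (prefLoss h c) (s.filter (h · x)) (s.filter (!h · x))

variable (htour : ∀ a b : α, a ≠ b → h a b = !h b a) (hc : ∀ u v, 0 ≤ c u v)
include htour hc

lemma splitCost_add_le {x : α} {s : List α} (hx : x ∉ s) :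
    splitCost h c x s + 2 * pairSum (prefLoss h c) (s.filter (h · x)) +
        2 * pairSum (prefLoss h c) (s.filter (!h · x)) ≤
      2 * pairSum (prefLoss h c) (x :: s) + crossExcess h c x s := by
  set L := s.filter (h · x)
  set R := s.filter (!h · x)
  have hLR : (L ++ R).Perm s := List.filter_append_perm _ s
  have hB : pairSum (prefLoss h c) (x :: s) = (L.map (prefLoss h c x)).sum +
      (R.map (prefLoss h c x)).sum + pairSum (prefLoss h c) L + pairSum (prefLoss h c) R +
      crossSum (prefLoss h c) L R := by
    rw [pairSum_cons, ← pairSum_perm (prefLoss_comm h c) hLR, pairSum_append,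
      ← (hLR.map _).sum_eq, List.map_append, List.sum_append]
    ring
  have hL : (L.map (c · x)).sum ≤ (L.map (prefLoss h c x)).sum := List.sum_le_sum fun a ha => by
    rw [prefLoss_comm]
    exact le_prefLoss hc (List.of_mem_filter (p := (h · x)) ha)
  have hR : (R.map (c x)).sum ≤ (R.map (prefLoss h c x)).sum := List.sum_le_sum fun b hb => by
    have hbx : b ≠ x := by rintro rfl; exact hx (List.mem_of_mem_filter hb)
    refine le_prefLoss hc ?_
    simpa [htour x b hbx.symm] using List.of_mem_filter hb
  have hL₀ : 0 ≤ (L.map (prefLoss h c x)).sum :=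
    List.sum_nonneg (by simpa using fun a _ => prefLoss_nonneg hc x a)
  have hR₀ : 0 ≤ (R.map (prefLoss h c x)).sum :=
    List.sum_nonneg (by simpa using fun a _ => prefLoss_nonneg hc x a)
  rw [hB, splitCost, crossExcess]
  linarith

variable [DecidableEq α]

variable (h c) in
def splitTerm (x a b : α) : ℝ :=
  if (a ≠ x ∧ h a x) ∧ (b ≠ x ∧ !h b x) then c a b - 2 * prefLoss h c a b else 0

variable (hcyc : ∀ a b x : α, a ≠ b → b ≠ x → a ≠ x →
  c a b + c b x + c x a ≤ 2 * (c b a + c x b + c a x))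
include hcyc

lemma splitTerm_symmetrize_nonpos (x a b : α) :
    splitTerm h c x a b + splitTerm h c x b a + splitTerm h c a x b + splitTerm h c a b x +
      splitTerm h c b x a + splitTerm h c b a x ≤ 0 := by
  have hself : ∀ y u, splitTerm h c y u u = 0 := fun y u => if_neg fun ⟨⟨_, h₁⟩, _, h₂⟩ => by
    simp_all
  by_cases hax : a = x
  · subst hax; simp only [hself]; simp [splitTerm]
  by_cases hbx : b = x
  · subst hbx; simp only [hself]; simp [splitTerm]
  by_cases hab : a = b
  · subst hab; simp only [hself]; simp [splitTerm]
  have hxa := htour x a (Ne.symm hax)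
  have hxb := htour x b (Ne.symm hbx)
  have hba := htour b a (Ne.symm hab)
  cases e₁ : h a x <;> cases e₂ : h b x <;> cases e₃ : h a b <;>
    simp [splitTerm, prefLoss, hr, hax, hbx, hab, Ne.symm hax, Ne.symm hbx, Ne.symm hab,
      e₁, e₂, e₃, hxa, hxb, hba] <;>
    linarith [hcyc a b x hab hbx hax, hcyc b a x (Ne.symm hab) hax hbx,
      hc a b, hc b a, hc a x, hc x a, hc b x, hc x b]

lemma sum_crossExcess_nonpos {t : List α} (ht : t.Nodup) :
    (t.map fun x => crossExcess h c x (t.erase x)).sum ≤ 0 := by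
  have hconv : ∀ x ∈ t,
      crossExcess h c x (t.erase x) = ∑ a ∈ t.toFinset, ∑ b ∈ t.toFinset, splitTerm h c x a b := by
    intro x _
    simp only [crossExcess, crossSum_filter_erase _ ht, Finset.mul_sum, ← Finset.sum_sub_distrib]
    exact Finset.sum_congr rfl fun a _ => Finset.sum_congr rfl fun b _ => by
      unfold splitTerm; split_ifs <;> simp
  rw [List.map_congr_left hconv, ← List.sum_toFinset _ ht]
  exact sum_sum_sum_nonpos_of_symmetrize_nonpos _ (splitTerm_symmetrize_nonpos htour hc hcyc)

theorem permAvg_pairSum_qsort_le {t : List α} (ht : t.Nodup) :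
    permAvg t (fun l => pairSum c (qsort h l)) ≤ 2 * pairSum (prefLoss h c) t := by
  rcases eq_or_ne t [] with rfl | hne
  · simp [permAvg, qsort]
  have hpivot : ∀ x ∈ t, permAvg (t.erase x) (fun xs => pairSum c (qsort h (x :: xs))) ≤
      2 * pairSum (prefLoss h c) t + crossExcess h c x (t.erase x) := by
    intro x hx
    have ih : ∀ p : α → Bool, permAvg ((t.erase x).filter p) (fun l => pairSum c (qsort h l)) ≤
        2 * pairSum (prefLoss h c) ((t.erase x).filter p) :=
      fun p => permAvg_pairSum_qsort_le ((ht.erase x).filter p)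
    have hsplit := splitCost_add_le htour hc (ht.not_mem_erase (a := x))
    calc _ = permAvg (t.erase x) (fun xs => pairSum c (qsort h (xs.filter (h · x))) +
            pairSum c (qsort h (xs.filter (!h · x))) + splitCost h c x (t.erase x)) :=
          permAvg_congr fun xs hxs => by rw [pairSum_qsort_cons, splitCost_perm h c x hxs]
      _ = permAvg ((t.erase x).filter (h · x)) (fun l => pairSum c (qsort h l)) +
            permAvg ((t.erase x).filter (!h · x)) (fun l => pairSum c (qsort h l)) +
            splitCost h c x (t.erase x) := by
          rw [permAvg_add, permAvg_add, permAvg_const,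
            permAvg_filter _ (ht.erase x) fun l => pairSum c (qsort h l),
            permAvg_filter _ (ht.erase x) fun l => pairSum c (qsort h l)]
      _ ≤ _ := by
          rw [pairSum_perm (prefLoss_comm h c) (List.perm_cons_erase hx)]
          linarith [ih (h · x), ih (!h · x)]
  refine le_of_mul_le_mul_left ?_ (Nat.cast_pos.2 (List.length_pos_iff.2 hne))
  rw [length_mul_permAvg ht]
  refine (List.sum_le_sum hpivot).trans ?_
  rw [List.sum_map_add, List.map_const', List.sum_replicate, nsmul_eq_mul]
  linarith [sum_crossExcess_nonpos htour hc hcyc ht]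
termination_by t.length
decreasing_by
  exact (List.length_filter_le _ _).trans_lt
    (List.length_erase_of_mem hx ▸ Nat.pred_lt (by simpa using hne))

end QuickSort

def misrankCost (ω : ℕ → ℕ → ℝ) (i j : ℕ) : ℝ := if j < i then ω i j else 0

section Weight

variable {ω : ℕ → ℕ → ℝ} (hωsym : ∀ i j, ω i j = ω j i)
  (hωtri : ∀ i j k, ω i j ≤ ω i k + ω k j)
include hωsym hωtri

lemma nonneg_of_symm_of_triangle (i j : ℕ) : 0 ≤ ω i j := by
  linarith [hωtri i i i, hωtri i i j, hωsym j i]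

lemma misrankCost_nonneg (i j : ℕ) : 0 ≤ misrankCost ω i j := by
  unfold misrankCost
  split_ifs
  exacts [nonneg_of_symm_of_triangle hωsym hωtri i j, le_rfl]

lemma misrankCost_cyclic_le
    (hωmon : ∀ i j k, (i < j ∧ j < k) ∨ (k < j ∧ j < i) → ω i j ≤ ω i k)
    {i j k : ℕ} (hij : i ≠ j) (hjk : j ≠ k) (hik : i ≠ k) :
    misrankCost ω i j + misrankCost ω j k + misrankCost ω k i ≤
      2 * (misrankCost ω j i + misrankCost ω k j + misrankCost ω i k) := by
  have key : ∀ {a b c}, a < b → b < c →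
      ω a c ≤ 2 * (ω a b + ω b c) ∧ ω a b + ω b c ≤ 2 * ω a c := by
    intro a b c hab hbc
    have hmon₁ := hωmon _ _ _ (Or.inl ⟨hab, hbc⟩)
    have hmon₂ := hωmon _ _ _ (Or.inr ⟨hab, hbc⟩)
    have hnn := nonneg_of_symm_of_triangle hωsym hωtri
    constructor <;> linarith [hωtri a c b, hnn a b, hnn b c, hωsym c b, hωsym c a]
  have := hωsym i j; have := hωsym j k; have := hωsym i k
  rcases hij.lt_or_gt with hij | hij <;> rcases hjk.lt_or_gt with hjk | hjk <;>
    rcases hik.lt_or_gt with hik | hik <;>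
    simp only [misrankCost, hij, hjk, hik, hij.not_gt, hjk.not_gt, hik.not_gt, if_true, if_false]
  · linarith [(key hij hjk).1]
  · exfalso; omega
  · linarith [(key hik hjk).2]
  · linarith [(key hik hij).1]
  · linarith [(key hij hik).2]
  · linarith [(key hjk hik).1]
  · exfalso; omega
  · linarith [(key hjk hij).2]

end Weight

theorem quicksort_loss_bound_general_general [Fintype V] {n : ℕ}
    (h : V → V → Bool) (htour : ∀ a b : V, a ≠ b → h a b = !h b a)
    (σs : V ≃ Fin n)
    (ω : ℕ → ℕ → ℝ)
    (hωsym : ∀ i j, ω i j = ω j i)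
    (hωmon : ∀ i j k, (i < j ∧ j < k) ∨ (k < j ∧ j < i) → ω i j ≤ ω i k)
    (hωtri : ∀ i j k, ω i j ≤ ω i k + ω k j) :
    qsExp (fun l =>
        ((n.choose 2 : ℝ))⁻¹ *
          ∑ p ∈ (Finset.univ : Finset (V × V)).filter (fun p => p.1 ≠ p.2),
            rankBefore (qsort h l) p.1 p.2 *
              (if (σs p.2 : ℕ) < (σs p.1 : ℕ) then (1 : ℝ) else 0) *
              ω (σs p.1) (σs p.2))
      ≤ 2 * (((n.choose 2 : ℝ))⁻¹ *
          ∑ p ∈ (Finset.univ : Finset (V × V)).filter (fun p => p.1 ≠ p.2),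
            hr h p.1 p.2 *
              (if (σs p.2 : ℕ) < (σs p.1 : ℕ) then (1 : ℝ) else 0) *
              ω (σs p.1) (σs p.2)) := by
  set c : V → V → ℝ := fun u v => misrankCost ω (σs u) (σs v)
  have hcost : ∀ u v, (if (σs v : ℕ) < σs u then (1 : ℝ) else 0) * ω (σs u) (σs v) = c u v :=
    fun _ _ => boole_mul _ _
  have hrank : ∀ {u v : V}, u ≠ v → (σs u : ℕ) ≠ σs v :=
    fun huv => Fin.val_injective.ne (σs.injective.ne huv)
  have hc : ∀ u v, 0 ≤ c u v := fun _ _ => misrankCost_nonneg hωsym hωtri _ _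
  have hcyc : ∀ a b x : V, a ≠ b → b ≠ x → a ≠ x →
      c a b + c b x + c x a ≤ 2 * (c b a + c x b + c a x) := fun _ _ _ hab hbx hax =>
    misrankCost_cyclic_le hωsym hωtri hωmon (hrank hab) (hrank hbx) (hrank hax)
  set t := (Finset.univ : Finset V).toList
  have ht : t.Nodup := Finset.nodup_toList _
  have hall : ∀ v, v ∈ t := fun v => Finset.mem_toList.2 (Finset.mem_univ v)
  simp_rw [mul_assoc, hcost]
  rw [qsExp_eq_permAvg, sum_offDiag_eq_pairSum (fun u v => hr h u v * c u v) ht hall,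
    permAvg_congr (G := fun l => (n.choose 2 : ℝ)⁻¹ * pairSum c (qsort h l)) fun l hl => by
      have hperm := (qsort_perm h l).trans hl
      rw [sum_rankBefore_mul c (hperm.nodup_iff.2 ht) fun v => hperm.mem_iff.2 (hall v)],
    permAvg_const_mul, mul_left_comm]
  exact mul_le_mul_of_nonneg_left (permAvg_pairSum_qsort_le htour hc hcyc ht) (by positivity)

/-- the expected weighted misranking loss of QuickSort's output
against a ground-truth ranking σ* is at most twice the loss of the preference
function h itself. -/
theorem quicksort_loss_bound_general [Fintype V] {n : ℕ}
    (hn : Fintype.card V = n)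
    (h : V → V → Bool) (htour : ∀ a b : V, a ≠ b → h a b = !h b a)
    (σs : V ≃ Fin n)
    (ω : ℕ → ℕ → ℝ) (hωnn : ∀ i j, 0 ≤ ω i j)
    (hωsym : ∀ i j, ω i j = ω j i)
    (hωmon : ∀ i j k, (i < j ∧ j < k) ∨ (k < j ∧ j < i) → ω i j ≤ ω i k)
    (hωtri : ∀ i j k, ω i j ≤ ω i k + ω k j) :
    qsExp (fun l =>
        ((n.choose 2 : ℝ))⁻¹ *
          ∑ p ∈ (Finset.univ : Finset (V × V)).filter (fun p => p.1 ≠ p.2),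
            rankBefore (qsort h l) p.1 p.2 *
              (if (σs p.2 : ℕ) < (σs p.1 : ℕ) then (1 : ℝ) else 0) *
              ω (σs p.1) (σs p.2))
      ≤ 2 * (((n.choose 2 : ℝ))⁻¹ *
          ∑ p ∈ (Finset.univ : Finset (V × V)).filter (fun p => p.1 ≠ p.2),
            hr h p.1 p.2 *
              (if (σs p.2 : ℕ) < (σs p.1 : ℕ) then (1 : ℝ) else 0) *
              ω (σs p.1) (σs p.2)) :=
  quicksort_loss_bound_general_general h htour σs ω hωsym hωmon hωtri
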